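/- arXiv:2605.06921 — 4 statements merged into one kernel-verified Lean document; each statement's English description precedes it below -/
import Mathlib

section
/- Let h(x) = 1^T x - (γ/2) x^T A x be the MIS QUBO objective on [0,1]^n with penalty γ > 1, where A is the adjacency matrix of a simple graph G. If x ∈ {0,1}^n is the indicator vector of a maximal independent set I, then x is a fixed point of projected gradient ascent: x = Π_{[0,1]^n}(x + α ∇h(x)) for every step size α > 0. -/
/-! On a vertex of `I` the gradient is `1 - γ · 0 = 1`, so the step pushes the coordinate
above `1` and the clamp returns it to `1`. Off `I`, maximality gives a neighbour in `I`, so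
`(A x)_v ≥ 1` and the gradient is at most `1 - γ < 0`; the step pushes the coordinate below `0`
and the clamp returns it to `0`. -/

/-- Coordinatewise projection (clamping) onto the box `[0,1]`. -/
noncomputable def clamp01 (a : ℝ) : ℝ := max 0 (min 1 a)

lemma clamp01_of_nonpos {a : ℝ} (ha : a ≤ 0) : clamp01 a = 0 :=
  max_eq_left ((min_le_right _ _).trans ha)

lemma clamp01_of_one_le {a : ℝ} (ha : 1 ≤ a) : clamp01 a = 1 := by
  rw [clamp01, min_eq_left ha, max_eq_right zero_le_one]

lemma Matrix.mulVec_ite_mem_apply {ι R : Type*} [Fintype ι] [DecidableEq ι] [Semiring R]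
    (A : Matrix ι ι R) (s : Finset ι) (i : ι) :
    A.mulVec (fun j => if j ∈ s then 1 else 0) i = ∑ j ∈ s, A i j := by
  simp only [Matrix.mulVec, dotProduct, mul_ite, mul_one, mul_zero, Finset.sum_ite_mem,
    Finset.univ_inter]

theorem stmt_1_general {n : ℕ} (A : Matrix (Fin n) (Fin n) ℝ)
    (hA01 : ∀ i j, A i j = 0 ∨ A i j = 1)
    (γ : ℝ) (hγ : 1 < γ)
    (I : Finset (Fin n))
    (x : Fin n → ℝ)
    (hx : ∀ v, x v = if v ∈ I then 1 else 0)
    (hind : ∀ u ∈ I, ∀ v ∈ I, A u v = 0)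
    (hmax : ∀ v : Fin n, v ∉ I → ∃ u ∈ I, A v u = 1)
    (α : ℝ) (hα : 0 < α) :
    (fun i => clamp01 (x i + α * (1 - γ * (A.mulVec x) i))) = x := by
  obtain rfl : x = fun v => if v ∈ I then 1 else 0 := funext hx
  funext i
  dsimp only
  rw [A.mulVec_ite_mem_apply]
  by_cases hi : i ∈ I
  · have hnbrs : ∑ j ∈ I, A i j = 0 := Finset.sum_eq_zero (hind i hi)
    rw [if_pos hi, hnbrs, clamp01_of_one_le (by linarith)]
  · obtain ⟨u, hu, hiu⟩ := hmax i hi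
    have hA_nonneg : ∀ j, 0 ≤ A i j := fun j => (hA01 i j).elim (·.ge) (·.symm ▸ zero_le_one)
    have hnbrs : 1 ≤ ∑ j ∈ I, A i j :=
      hiu ▸ Finset.single_le_sum (fun j _ => hA_nonneg j) hu
    have hgrad : 1 - γ * ∑ j ∈ I, A i j ≤ 0 := by nlinarith
    rw [if_neg hi, zero_add, clamp01_of_nonpos (mul_nonpos_of_nonneg_of_nonpos hα.le hgrad)]

/-- The indicator vector of a maximal independent set is a fixed point of
projected gradient ascent for the MIS QUBO `h(x) = 1ᵀx - (γ/2) xᵀAx`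
(for which `∇h(x) = 1 - γ A x`), for every step size `α > 0` and penalty
`γ > 1`. -/
theorem stmt_1 {n : ℕ} (A : Matrix (Fin n) (Fin n) ℝ)
    (hA01 : ∀ i j, A i j = 0 ∨ A i j = 1)
    (hAsymm : A.IsSymm)
    (hAdiag : ∀ i, A i i = 0)
    (γ : ℝ) (hγ : 1 < γ)
    (I : Finset (Fin n))
    (x : Fin n → ℝ)
    (hx : ∀ v, x v = if v ∈ I then 1 else 0)
    (hind : ∀ u ∈ I, ∀ v ∈ I, A u v = 0)
    (hmax : ∀ v : Fin n, v ∉ I → ∃ u ∈ I, A v u = 1)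
    (α : ℝ) (hα : 0 < α) :
    (fun i => clamp01 (x i + α * (1 - γ * (A.mulVec x) i))) = x :=
  stmt_1_general A hA01 γ hγ I x hx hind hmax α hα
end

section
/- Let f_P(x) = x^T (L + λI) x with λ > 0, where L is the Laplacian of a simple graph. Then every binary point x ∈ {-1,1}^n is a fixed point of projected gradient ascent on [-1,1]^n: Π_{[-1,1]^n}(x + α ∇f_P(x)) = x for every step size α > 0. -/
/-- Coordinatewise projection (clamping) onto the box `[-1,1]`. -/
noncomputable def clamp (a : ℝ) : ℝ := max (-1) (min 1 a)

/-! For binary `x`, `xᵢ (L x)ᵢ = ∑ⱼ Aᵢⱼ (1 - xᵢ xⱼ) ≥ 0`, so `xᵢ ((L + λI) x)ᵢ ≥ λ > 0`: the gradient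
step pushes every coordinate further out of the box on its own side, and clamping returns it to `xᵢ`. -/

open Matrix

theorem clamp_add_of_sign {a t : ℝ} (ha : a = 1 ∨ a = -1) (hat : 0 ≤ a * t) :
    clamp (a + t) = a := by
  unfold clamp
  rcases ha with rfl | rfl
  · rw [min_eq_left (by linarith)]; norm_num
  · rw [min_eq_right (by linarith), max_eq_left (by linarith)]

section Laplacian

variable {ι : Type*} [Fintype ι] [DecidableEq ι]

theorem laplacian_mulVec_apply (A : Matrix ι ι ℝ) (x : ι → ℝ) (i : ι) :
    ((diagonal (fun i => ∑ j, A i j) - A) *ᵥ x) i = ∑ j, A i j * (x i - x j) := by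
  rw [sub_mulVec, Pi.sub_apply, mulVec_diagonal, mulVec, dotProduct, Finset.sum_mul,
    ← Finset.sum_sub_distrib]
  simp only [mul_sub]

theorem mul_laplacian_mulVec_nonneg (A : Matrix ι ι ℝ) (hA : ∀ i j, 0 ≤ A i j) (x : ι → ℝ)
    (hx : ∀ i, x i = 1 ∨ x i = -1) (i : ι) :
    0 ≤ x i * ((diagonal (fun i => ∑ j, A i j) - A) *ᵥ x) i := by
  rw [laplacian_mulVec_apply, Finset.mul_sum]
  refine Finset.sum_nonneg fun j _ => ?_
  have hxx : 0 ≤ x i * (x i - x j) := by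
    rcases hx i with h | h <;> rcases hx j with h' | h' <;> norm_num [h, h']
  calc 0 ≤ A i j * (x i * (x i - x j)) := mul_nonneg (hA i j) hxx
    _ = x i * (A i j * (x i - x j)) := by ring

end Laplacian

theorem stmt_5_general {n : ℕ} (A : Matrix (Fin n) (Fin n) ℝ)
    (hA01 : ∀ i j, A i j = 0 ∨ A i j = 1)
    (L : Matrix (Fin n) (Fin n) ℝ)
    (hL : L = Matrix.diagonal (fun i => ∑ j, A i j) - A)
    (lam : ℝ) (hlam : 0 < lam)
    (x : Fin n → ℝ)
    (hx : ∀ i, x i = 1 ∨ x i = -1)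
    (α : ℝ) (hα : 0 < α) :
    (fun i => clamp (x i + α * (2 * ((L + lam • (1 : Matrix (Fin n) (Fin n) ℝ)).mulVec x) i)))
      = x := by
  funext i
  have hA : ∀ i j, 0 ≤ A i j := fun i j => by
    rcases hA01 i j with h | h <;> simp [h]
  have hxx : x i * x i = 1 := by rcases hx i with h | h <;> rw [h] <;> norm_num
  have hgrad : lam ≤ x i * ((L + lam • (1 : Matrix (Fin n) (Fin n) ℝ)) *ᵥ x) i := by
    have hLx := mul_laplacian_mulVec_nonneg A hA x hx i
    rw [← hL] at hLx
    simp only [add_mulVec, smul_mulVec, one_mulVec, Pi.add_apply, Pi.smul_apply, smul_eq_mul]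
    linear_combination hLx - lam * hxx
  refine clamp_add_of_sign (hx i) ?_
  calc 0 ≤ 2 * α * (x i * ((L + lam • (1 : Matrix (Fin n) (Fin n) ℝ)) *ᵥ x) i) :=
      mul_nonneg (by positivity) (hlam.le.trans hgrad)
    _ = _ := by ring

/-- For `f_P(x) = xᵀ (L + λI) x` with `λ > 0`, where `L` is the Laplacian of a
simple graph (so `∇f_P(x) = 2 (L + λI) x`), every binary point `x ∈ {-1,1}ⁿ`
is a fixed point of projected gradient ascent on `[-1,1]ⁿ`, for every step
size `α > 0`. -/
theorem stmt_5 {n : ℕ} (A : Matrix (Fin n) (Fin n) ℝ)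
    (hA01 : ∀ i j, A i j = 0 ∨ A i j = 1)
    (hAsymm : A.IsSymm)
    (hAdiag : ∀ i, A i i = 0)
    (L : Matrix (Fin n) (Fin n) ℝ)
    (hL : L = Matrix.diagonal (fun i => ∑ j, A i j) - A)
    (lam : ℝ) (hlam : 0 < lam)
    (x : Fin n → ℝ)
    (hx : ∀ i, x i = 1 ∨ x i = -1)
    (α : ℝ) (hα : 0 < α) :
    (fun i => clamp (x i + α * (2 * ((L + lam • (1 : Matrix (Fin n) (Fin n) ℝ)).mulVec x) i)))
      = x :=
  stmt_5_general A hA01 L hL lam hlam x hx α hα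
end

section
/- Let A be the adjacency matrix of a simple graph, λ ∈ (0,2), and f_B(x) = -λ 1^T x - x^T A x. If x ∈ {-1,1}^n is 1-flip repairable for f_A (i.e., x_i (A x)_i > 0 for some i), then at that index x_i ∇_i f_B(x) ≤ -2 + λ < 0; consequently x is not a fixed point of projected gradient ascent on [-1,1]^n. -/
open Matrix

/-
For a sign vector `x` and a 0/1 matrix `A`, the quantity `x_i (A x)_i` is an integer, so once it is
positive it is at least `1`. Then `x_i ∇_i f_B(x) = -2 x_i (A x)_i - λ x_i ≤ -2 + λ < 0`, i.e. the
gradient step at coordinate `i` pushes `x_i` strictly into the interior of `[-1, 1]`, and clamping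
cannot bring it back to `x_i = ±1`.
-/

lemma mulVec_apply_mem_subring {R m n : Type*} [Ring R] [Fintype n] (S : Subring R)
    {A : Matrix m n R} {x : n → R} (hA : ∀ i j, A i j ∈ S) (hx : ∀ j, x j ∈ S) (i : m) :
    (A *ᵥ x) i ∈ S :=
  sum_mem fun j _ => mul_mem (hA i j) (hx j)

lemma one_le_of_pos_of_mem_intCast_range {r : ℝ} (hr : r ∈ (Int.castRingHom ℝ).range)
    (hpos : 0 < r) : 1 ≤ r := by
  obtain ⟨m, rfl⟩ := hr
  simp only [eq_intCast, Int.cast_pos] at hpos ⊢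
  exact_mod_cast hpos

lemma sign_mul_neg_two_mul_sub_le {s a lam : ℝ} (hs : s = 1 ∨ s = -1) (hlam : 0 ≤ lam)
    (ha : 1 ≤ s * a) : s * (-2 * a - lam) ≤ -2 + lam := by
  rcases hs with rfl | rfl <;> linarith

lemma clamp_add_ne_of_mul_neg {s t : ℝ} (hs : s = 1 ∨ s = -1) (ht : s * t < 0) :
    clamp (s + t) ≠ s := by
  unfold clamp
  rcases hs with rfl | rfl
  · exact (max_lt (by norm_num) ((min_le_right _ _).trans_lt (by linarith))).ne
  · exact (lt_max_of_lt_right (lt_min (by norm_num) (by linarith))).ne'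

theorem stmt_10_general {n : ℕ} (A : Matrix (Fin n) (Fin n) ℝ)
    (hA01 : ∀ i j, A i j = 0 ∨ A i j = 1)
    (lam : ℝ) (hlam0 : 0 < lam) (hlam2 : lam < 2)
    (x : Fin n → ℝ)
    (hx : ∀ j, x j = 1 ∨ x j = -1) :
    (∀ i : Fin n, 0 < x i * (A.mulVec x) i →
      x i * (-2 * (A.mulVec x) i - lam) ≤ -2 + lam ∧ (-2 + lam < 0)) ∧
    ((∃ i : Fin n, 0 < x i * (A.mulVec x) i) →
      ∀ α : ℝ, 0 < α →
        (fun i => clamp (x i + α * (-2 * (A.mulVec x) i - lam))) ≠ x) := by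
  set Z := (Int.castRingHom ℝ).range
  have hxZ : ∀ j, x j ∈ Z := fun j => by
    rcases hx j with h | h <;> rw [h]
    exacts [one_mem Z, neg_mem (one_mem Z)]
  have hAZ : ∀ i j, A i j ∈ Z := fun i j => by
    rcases hA01 i j with h | h <;> rw [h]
    exacts [zero_mem Z, one_mem Z]
  have hneg : -2 + lam < 0 := by linarith
  have hstep : ∀ i, 0 < x i * (A *ᵥ x) i → x i * (-2 * (A *ᵥ x) i - lam) ≤ -2 + lam :=
    fun i hpos => sign_mul_neg_two_mul_sub_le (hx i) hlam0.le <|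
      one_le_of_pos_of_mem_intCast_range
        (mul_mem (hxZ i) (mulVec_apply_mem_subring Z hAZ hxZ i)) hpos
  refine ⟨fun i hpos => ⟨hstep i hpos, hneg⟩, ?_⟩
  rintro ⟨i, hpos⟩ α hα hfix
  refine clamp_add_ne_of_mul_neg (hx i) ?_ (congrFun hfix i)
  rw [mul_left_comm]
  exact mul_neg_of_pos_of_neg hα ((hstep i hpos).trans_lt hneg)

/-- For `f_B(x) = -λ 1ᵀx - xᵀAx` with `λ ∈ (0,2)` (so
`∇f_B(x) = -2Ax - λ1`): if a binary `x ∈ {-1,1}ⁿ` is 1-flip repairable for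
`f_A`, i.e., `x_i (A x)_i > 0` for some `i`, then at every such index
`x_i ∇_i f_B(x) ≤ -2 + λ < 0`, and consequently `x` is not a fixed point of
projected gradient ascent on `[-1,1]ⁿ`. -/
theorem stmt_10 {n : ℕ} (A : Matrix (Fin n) (Fin n) ℝ)
    (hA01 : ∀ i j, A i j = 0 ∨ A i j = 1)
    (hAsymm : A.IsSymm)
    (hAdiag : ∀ i, A i i = 0)
    (lam : ℝ) (hlam0 : 0 < lam) (hlam2 : lam < 2)
    (x : Fin n → ℝ)
    (hx : ∀ j, x j = 1 ∨ x j = -1) :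
    (∀ i : Fin n, 0 < x i * (A.mulVec x) i →
      x i * (-2 * (A.mulVec x) i - lam) ≤ -2 + lam ∧ (-2 + lam < 0)) ∧
    ((∃ i : Fin n, 0 < x i * (A.mulVec x) i) →
      ∀ α : ℝ, 0 < α →
        (fun i => clamp (x i + α * (-2 * (A.mulVec x) i - lam))) ≠ x) :=
  stmt_10_general A hA01 lam hlam0 hlam2 x hx
end

section
/- Let f_B(x) = -λ 1^T x - x^T A x with 0 < λ < 2, where A is the adjacency matrix of a simple graph. Then every local maximizer x* of f_B over the box [-1,1]^n is binary: x* ∈ {-1,1}^n. -/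
/-!
At a local maximizer `x` of `f(y) = -λ ∑ yⱼ - yᵀAy` on the box, every direction supported on the
interior coordinates `I = {i | -1 < xᵢ < 1}` is feasible both ways, so `f` restricted to such a line
has vanishing slope and nonpositive curvature at `x`. The curvature along `eᵢ - eⱼ` is
`2 Aᵢⱼ` (the diagonal of `A` vanishes), so `I` is an independent set of the graph. The slope along
`eᵢ` gives `(Ax)ᵢ = -λ/2` for `i ∈ I`; but then every neighbour `j` of `i` has `xⱼ = ±1`, so
`(Ax)ᵢ` is an integer, which `-λ/2 ∈ (-1, 0)` is not. Hence `I` is empty.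
-/

open Matrix Filter Topology Set

theorem eq_zero_and_nonpos_of_eventually_mul_add_mul_sq_nonpos {a b : ℝ}
    (h : ∀ᶠ t in 𝓝 (0 : ℝ), a * t + b * t ^ 2 ≤ 0) : a = 0 ∧ b ≤ 0 := by
  have hlim : Tendsto (fun t : ℝ => a + b * t) (𝓝 0) (𝓝 a) :=
    (by fun_prop : Continuous fun t : ℝ => a + b * t).tendsto' 0 a (by simp)
  have hright : ∀ᶠ t in 𝓝[>] (0 : ℝ), 0 < t ∧ a + b * t ≤ 0 := by
    filter_upwards [nhdsWithin_le_nhds h, self_mem_nhdsWithin] with t ht (htpos : 0 < t)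
    exact ⟨htpos, nonpos_of_mul_nonpos_left (by linarith) htpos⟩
  have hleft : ∀ᶠ t in 𝓝[<] (0 : ℝ), 0 ≤ a + b * t := by
    filter_upwards [nhdsWithin_le_nhds h, self_mem_nhdsWithin] with t ht (htneg : t < 0)
    nlinarith
  have ha : a = 0 := le_antisymm
    (le_of_tendsto (hlim.mono_left nhdsWithin_le_nhds) (hright.mono fun _ ht => ht.2))
    (ge_of_tendsto (hlim.mono_left nhdsWithin_le_nhds) hleft)
  obtain ⟨t, htpos, ht⟩ := hright.exists
  exact ⟨ha, nonpos_of_mul_nonpos_left (by linarith) htpos⟩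

theorem IsLocalMaxOn.eventually_add_smul_le {E : Type*} [TopologicalSpace E] [AddCommGroup E]
    [Module ℝ E] [ContinuousAdd E] [ContinuousSMul ℝ E] {f : E → ℝ} {s : Set E} {x d : E}
    (hf : IsLocalMaxOn f s x) (hs : ∀ᶠ t in 𝓝 (0 : ℝ), x + t • d ∈ s) :
    ∀ᶠ t in 𝓝 (0 : ℝ), f (x + t • d) ≤ f x := by
  have hcont : Tendsto (fun t : ℝ => x + t • d) (𝓝 0) (𝓝 x) :=
    (by fun_prop : Continuous fun t : ℝ => x + t • d).tendsto' 0 x (by simp)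
  exact (tendsto_nhdsWithin_iff.2 ⟨hcont, hs⟩).eventually hf

theorem eventually_add_smul_mem_box {ι : Type*} [Finite ι] {a b : ℝ} {x d : ι → ℝ}
    (hx : ∀ j, x j ∈ Icc a b) (hd : ∀ j, d j ≠ 0 → x j ∈ Ioo a b) :
    ∀ᶠ t in 𝓝 (0 : ℝ), x + t • d ∈ {y : ι → ℝ | ∀ j, y j ∈ Icc a b} := by
  refine eventually_all.2 fun j => ?_
  by_cases hdj : d j = 0
  · exact Eventually.of_forall fun t => by simpa [hdj] using hx j
  have hcont : Tendsto (fun t : ℝ => x j + t * d j) (𝓝 0) (𝓝 (x j)) :=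
    (by fun_prop : Continuous fun t : ℝ => x j + t * d j).tendsto' 0 (x j) (by simp)
  filter_upwards [hcont.eventually (isOpen_Ioo.mem_nhds (hd j hdj))] with t ht
  exact Ioo_subset_Icc_self ht

section BoxQuadratic

variable {ι : Type*} [Fintype ι] (A : Matrix ι ι ℝ) (lam : ℝ)

def boxQuadratic (y : ι → ℝ) : ℝ := -lam * ∑ j, y j - y ⬝ᵥ A *ᵥ y

variable {A}

theorem boxQuadratic_add_smul (hA : A.IsSymm) (x d : ι → ℝ) (t : ℝ) :
    boxQuadratic A lam (x + t • d) = boxQuadratic A lam x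
      + (-lam * ∑ j, d j - 2 * (d ⬝ᵥ A *ᵥ x)) * t - (d ⬝ᵥ A *ᵥ d) * t ^ 2 := by
  have hswap : x ⬝ᵥ A *ᵥ d = d ⬝ᵥ A *ᵥ x := by
    rw [dotProduct_mulVec, ← mulVec_transpose, hA.eq, dotProduct_comm]
  simp only [boxQuadratic, Pi.add_apply, Pi.smul_apply, smul_eq_mul, Finset.sum_add_distrib,
    ← Finset.mul_sum, mulVec_add, mulVec_smul, dotProduct_add, add_dotProduct, dotProduct_smul,
    smul_dotProduct, hswap]
  ring

theorem slope_eq_zero_and_curvature_nonneg_of_isLocalMaxOn (hA : A.IsSymm) {x d : ι → ℝ}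
    (hbox : ∀ j, x j ∈ Icc (-1 : ℝ) 1)
    (hloc : IsLocalMaxOn (boxQuadratic A lam) {y : ι → ℝ | ∀ j, y j ∈ Icc (-1 : ℝ) 1} x)
    (hd : ∀ j, d j ≠ 0 → x j ∈ Ioo (-1 : ℝ) 1) :
    -lam * ∑ j, d j - 2 * (d ⬝ᵥ A *ᵥ x) = 0 ∧ 0 ≤ d ⬝ᵥ A *ᵥ d := by
  have h := hloc.eventually_add_smul_le (eventually_add_smul_mem_box hbox hd)
  obtain ⟨hslope, hcurv⟩ := eq_zero_and_nonpos_of_eventually_mul_add_mul_sq_nonpos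
    (a := -lam * ∑ j, d j - 2 * (d ⬝ᵥ A *ᵥ x)) (b := -(d ⬝ᵥ A *ᵥ d)) <| by
      filter_upwards [h] with t ht
      rw [boxQuadratic_add_smul lam hA] at ht
      linarith
  exact ⟨hslope, neg_nonpos.1 hcurv⟩

theorem mulVec_apply_mem_bot_of_adj_ne_zero {i : ι} (hA01 : ∀ j, A i j = 0 ∨ A i j = 1)
    {x : ι → ℝ} (hx : ∀ j, A i j ≠ 0 → x j = 1 ∨ x j = -1) : (A *ᵥ x) i ∈ (⊥ : Subring ℝ) := by
  refine Subring.sum_mem _ fun j _ => ?_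
  rcases hA01 j with h | h
  · simp [h]
  rcases hx j (by simp [h]) with hxj | hxj
  · exact Subring.mem_bot.2 ⟨1, by simp [h, hxj]⟩
  · exact Subring.mem_bot.2 ⟨-1, by simp [h, hxj]⟩

variable [DecidableEq ι]

theorem mulVec_apply_eq_of_isLocalMaxOn (hA : A.IsSymm) {x : ι → ℝ}
    (hbox : ∀ j, x j ∈ Icc (-1 : ℝ) 1)
    (hloc : IsLocalMaxOn (boxQuadratic A lam) {y : ι → ℝ | ∀ j, y j ∈ Icc (-1 : ℝ) 1} x)
    {i : ι} (hi : x i ∈ Ioo (-1 : ℝ) 1) : (A *ᵥ x) i = -lam / 2 := by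
  have h := (slope_eq_zero_and_curvature_nonneg_of_isLocalMaxOn lam hA hbox hloc
    (d := Pi.single i (1 : ℝ)) fun j hj => by
      by_cases hji : j = i
      · rwa [hji]
      simp [hji] at hj).1
  rw [Finset.sum_pi_single', if_pos (Finset.mem_univ i), single_dotProduct] at h
  linarith

theorem apply_nonpos_of_isLocalMaxOn (hA : A.IsSymm) (hdiag : ∀ i, A i i = 0) {x : ι → ℝ}
    (hbox : ∀ j, x j ∈ Icc (-1 : ℝ) 1)
    (hloc : IsLocalMaxOn (boxQuadratic A lam) {y : ι → ℝ | ∀ j, y j ∈ Icc (-1 : ℝ) 1} x)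
    {i j : ι} (hi : x i ∈ Ioo (-1 : ℝ) 1) (hj : x j ∈ Ioo (-1 : ℝ) 1) : A i j ≤ 0 := by
  have hcurv := (slope_eq_zero_and_curvature_nonneg_of_isLocalMaxOn lam hA hbox hloc
    (d := Pi.single i (1 : ℝ) - Pi.single j 1) fun k hk => by
      by_cases hki : k = i
      · rwa [hki]
      by_cases hkj : k = j
      · rwa [hkj]
      simp [hki, hkj] at hk).2
  simp only [mulVec_sub, mulVec_single_one, sub_dotProduct, dotProduct_sub, single_dotProduct,
    col_apply, one_mul, hdiag, hA.apply i j] at hcurv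
  linarith

end BoxQuadratic

/-- For `f_B(x) = -λ 1ᵀx - xᵀAx` with `0 < λ < 2`, where `A` is the adjacency
matrix of a simple graph, every local maximizer of `f_B` over the box
`[-1,1]ⁿ` is binary. -/
theorem stmt_14 {n : ℕ} (A : Matrix (Fin n) (Fin n) ℝ)
    (hA01 : ∀ i j, A i j = 0 ∨ A i j = 1)
    (hAsymm : A.IsSymm)
    (hAdiag : ∀ i, A i i = 0)
    (lam : ℝ) (hlam0 : 0 < lam) (hlam2 : lam < 2)
    (xstar : Fin n → ℝ)
    (hbox : ∀ j, xstar j ∈ Set.Icc (-1 : ℝ) 1)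
    (hloc : IsLocalMaxOn (fun y : Fin n → ℝ => -lam * (∑ j, y j) - y ⬝ᵥ A.mulVec y)
      {y : Fin n → ℝ | ∀ j, y j ∈ Set.Icc (-1 : ℝ) 1} xstar) :
    ∀ i : Fin n, xstar i = 1 ∨ xstar i = -1 := by
  have hinterior : ∀ j, ¬(xstar j = 1 ∨ xstar j = -1) → xstar j ∈ Ioo (-1 : ℝ) 1 := by
    intro j hj
    obtain ⟨hj1, hjm1⟩ := not_or.1 hj
    exact ⟨(hbox j).1.lt_of_ne' hjm1, (hbox j).2.lt_of_ne hj1⟩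
  intro i
  by_contra hi
  have hnbr : ∀ j, A i j ≠ 0 → xstar j = 1 ∨ xstar j = -1 := fun j hij => by
    by_contra hj
    have hAij := apply_nonpos_of_isLocalMaxOn lam hAsymm hAdiag hbox hloc
      (hinterior i hi) (hinterior j hj)
    exact hij ((hA01 i j).resolve_right fun h => by linarith)
  obtain ⟨m, hm⟩ := Subring.mem_bot.1 (mulVec_apply_mem_bot_of_adj_ne_zero (hA01 i) hnbr)
  rw [mulVec_apply_eq_of_isLocalMaxOn lam hAsymm hbox hloc (hinterior i hi)] at hm
  have hm_lo : (-1 : ℝ) < m := by linarith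
  have hm_hi : (m : ℝ) < 0 := by linarith
  norm_cast at hm_lo hm_hi
  omega
end
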